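/- In a Cartesian k-differential category over a ℚ≥0-algebra k, the Taylor differential monomial commutes with differentiation: M^(n)[D[f]](a,b) = D[M^(n)[f]](a,b), i.e. the n-th Taylor monomial of the derivative equals the derivative of the n-th Taylor monomial. -/

import Mathlib

/-! A self-contained formalization of (Cartesian) `k`-differential categories. -/

universe u v w

/-- A Cartesian left `k`-linear category equipped with a differential combinator
satisfying the axioms **[CD.1]**–**[CD.7]**: a Cartesian `k`-differential category.
Composition `comp f g` is in diagrammatic order (`g ∘ f`). -/
structure CDC (k : Type w) [CommSemiring k] where
  Obj : Type u
  Hom : Obj → Obj → Type v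
  idm : ∀ A : Obj, Hom A A
  comp : ∀ {A B C : Obj}, Hom A B → Hom B C → Hom A C
  id_comp : ∀ {A B : Obj} (f : Hom A B), comp (idm A) f = f
  comp_id : ∀ {A B : Obj} (f : Hom A B), comp f (idm B) = f
  assoc : ∀ {A B C D : Obj} (f : Hom A B) (g : Hom B C) (h : Hom C D),
    comp (comp f g) h = comp f (comp g h)
  -- each homset is a `k`-module
  add : ∀ {A B : Obj}, Hom A B → Hom A B → Hom A B
  zero : ∀ {A B : Obj}, Hom A B
  smul : ∀ {A B : Obj}, k → Hom A B → Hom A B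
  add_assoc : ∀ {A B : Obj} (f g h : Hom A B), add (add f g) h = add f (add g h)
  add_comm : ∀ {A B : Obj} (f g : Hom A B), add f g = add g f
  zero_add : ∀ {A B : Obj} (f : Hom A B), add zero f = f
  one_smul : ∀ {A B : Obj} (f : Hom A B), smul 1 f = f
  mul_smul : ∀ {A B : Obj} (r s : k) (f : Hom A B), smul (r * s) f = smul r (smul s f)
  smul_add : ∀ {A B : Obj} (r : k) (f g : Hom A B), smul r (add f g) = add (smul r f) (smul r g)
  add_smul : ∀ {A B : Obj} (r s : k) (f : Hom A B), smul (r + s) f = add (smul r f) (smul s f)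
  zero_smul : ∀ {A B : Obj} (f : Hom A B), smul 0 f = zero
  smul_zero : ∀ {A B : Obj} (r : k), smul r (zero (A := A) (B := B)) = zero
  -- pre-composition is `k`-linear
  comp_add : ∀ {A B C : Obj} (x : Hom A B) (f g : Hom B C),
    comp x (add f g) = add (comp x f) (comp x g)
  comp_smul : ∀ {A B C : Obj} (x : Hom A B) (r : k) (f : Hom B C),
    comp x (smul r f) = smul r (comp x f)
  comp_zero : ∀ {A B C : Obj} (x : Hom A B), comp x (zero (A := B) (B := C)) = zero
  -- finite products
  prod : Obj → Obj → Obj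
  fst : ∀ {A B : Obj}, Hom (prod A B) A
  snd : ∀ {A B : Obj}, Hom (prod A B) B
  lift : ∀ {C A B : Obj}, Hom C A → Hom C B → Hom C (prod A B)
  lift_fst : ∀ {C A B : Obj} (f : Hom C A) (g : Hom C B), comp (lift f g) fst = f
  lift_snd : ∀ {C A B : Obj} (f : Hom C A) (g : Hom C B), comp (lift f g) snd = g
  lift_unique : ∀ {C A B : Obj} (h : Hom C (prod A B)), lift (comp h fst) (comp h snd) = h
  -- projections are `k`-linear
  fst_add : ∀ {C A B : Obj} (f g : Hom C (prod A B)),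
    comp (add f g) fst = add (comp f fst) (comp g fst)
  fst_smul : ∀ {C A B : Obj} (r : k) (f : Hom C (prod A B)),
    comp (smul r f) fst = smul r (comp f fst)
  snd_add : ∀ {C A B : Obj} (f g : Hom C (prod A B)),
    comp (add f g) snd = add (comp f snd) (comp g snd)
  snd_smul : ∀ {C A B : Obj} (r : k) (f : Hom C (prod A B)),
    comp (smul r f) snd = smul r (comp f snd)
  -- the differential combinator
  D : ∀ {A B : Obj}, Hom A B → Hom (prod A A) B
  CD1 : ∀ {A B : Obj} (r s : k) (f g : Hom A B),
    D (add (smul r f) (smul s g)) = add (smul r (D f)) (smul s (D g))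
  CD2 : ∀ {A B C : Obj} (f : Hom A B) (r s : k) (a b c : Hom C A),
    comp (lift a (add (smul r b) (smul s c))) (D f)
      = add (smul r (comp (lift a b) (D f))) (smul s (comp (lift a c) (D f)))
  CD3id : ∀ {A : Obj}, D (idm A) = snd
  CD3fst : ∀ {A B : Obj}, D (fst (A := A) (B := B)) = comp snd fst
  CD3snd : ∀ {A B : Obj}, D (snd (A := A) (B := B)) = comp snd snd
  CD4 : ∀ {A B C : Obj} (f : Hom A B) (g : Hom A C), D (lift f g) = lift (D f) (D g)
  CD5 : ∀ {A B C : Obj} (f : Hom A B) (g : Hom B C),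
    D (comp f g) = comp (lift (comp fst f) (D f)) (D g)
  CD6 : ∀ {A B C : Obj} (f : Hom A B) (a b : Hom C A),
    comp (lift (lift a zero) (lift zero b)) (D (D f)) = comp (lift a b) (D f)
  CD7 : ∀ {A B C : Obj} (f : Hom A B) (a b c d : Hom C A),
    comp (lift (lift a b) (lift c d)) (D (D f))
      = comp (lift (lift a c) (lift b d)) (D (D f))

namespace CDC

variable {k : Type w} [CommSemiring k]

/-- `pow A n` is the product `A × A^{×ⁿ}` (so `pow A 0 = A`), the domain of the
`n`-th derivative `∂⁽ⁿ⁾[f] : A × A^{×ⁿ} → B`. -/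
def pow (X : CDC k) (A : X.Obj) : ℕ → X.Obj
  | 0 => A
  | n + 1 => X.prod (X.pow A n) A

/-- `pad A n : A → A × A^{×ⁿ}` is `a ↦ (a, 0, …, 0)`. -/
def pad (X : CDC k) (A : X.Obj) : (n : ℕ) → X.Hom A (X.pow A n)
  | 0 => X.idm A
  | n + 1 => X.lift (X.pad A n) X.zero

/-- The `n`-th derivative `∂⁽ⁿ⁾[f] : A × A^{×ⁿ} → B`, defined inductively by
`∂⁽⁰⁾[f] = f` and `∂⁽ⁿ⁺¹⁾[f]` is the partial derivative of `∂⁽ⁿ⁾[f]` in its first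
argument (obtained by padding the direction vector with zeroes). -/
def pd (X : CDC k) {A B : X.Obj} : (n : ℕ) → X.Hom A B → X.Hom (X.pow A n) B
  | 0, f => f
  | n + 1, f =>
      X.comp (X.lift X.fst (X.comp X.snd (X.pad A n))) (X.D (X.pd n f))

/-- `diag A n : A → A × A^{×ⁿ}` is `x ↦ (0, x, …, x)`. -/
def diag (X : CDC k) (A : X.Obj) : (n : ℕ) → X.Hom A (X.pow A n)
  | 0 => X.zero
  | n + 1 => X.lift (X.diag A n) (X.idm A)

/-- A map `p` is a `D`-polynomial if `∂⁽ⁿ⁺¹⁾[p] = 0` for some `n`. -/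
def IsPoly (X : CDC k) {A B : X.Obj} (p : X.Hom A B) : Prop :=
  ∃ n : ℕ, X.pd (n + 1) p = X.zero

/-- The `D`-degree of `p`: the least `n` with `∂⁽ⁿ⁺¹⁾[p] = 0`. -/
noncomputable def deg (X : CDC k) {A B : X.Obj} (p : X.Hom A B) : ℕ :=
  sInf {n : ℕ | X.pd (n + 1) p = X.zero}

end CDC

/-- A Cartesian `k`-differential category over a commutative `ℚ≥0`-algebra `k`,
i.e. where every `n! ∈ k` is invertible. -/
structure QCDC (k : Type w) [CommSemiring k] extends CDC k where
  invFact : ℕ → k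
  invFact_spec : ∀ n : ℕ, (Nat.factorial n : k) * invFact n = 1

namespace QCDC

variable {k : Type w} [CommSemiring k]

/-- The `n`-th Taylor differential monomial `M⁽ⁿ⁾[f](x) = (1/n!) · ∂⁽ⁿ⁾[f](0, x, …, x)`. -/
def M (X : QCDC k) {A B : X.Obj} (n : ℕ) (f : X.Hom A B) : X.Hom A B :=
  X.smul (X.invFact n) (X.comp (X.toCDC.diag A n) (X.toCDC.pd n f))

/-- The `n`-th Taylor differential polynomial `T⁽ⁿ⁾[f] = Σ_{j=0}^n M⁽ʲ⁾[f]`. -/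
def T (X : QCDC k) {A B : X.Obj} : ℕ → X.Hom A B → X.Hom A B
  | 0, f => X.M 0 f
  | n + 1, f => X.add (X.T n f) (X.M (n + 1) f)

/-- The `D`-distance: `2^(-n)` for the least `n` where the Taylor monomials of `f` and `g`
disagree, and `0` if they all agree. -/
noncomputable def dD (X : QCDC k) {A B : X.Obj} (f g : X.Hom A B) : ℝ :=
  open Classical in
  if ∀ n : ℕ, X.M n f = X.M n g then 0
  else (2 : ℝ) ^ (-((sInf {n : ℕ | ¬ X.M n f = X.M n g} : ℕ) : ℤ))

/-- A Cartesian `k`-differential category is **Taylor** if maps are completely determined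
by their Taylor differential monomials. -/
def Taylor (X : QCDC k) : Prop :=
  ∀ (A B : X.Obj) (f g : X.Hom A B), (∀ n : ℕ, X.M n f = X.M n g) → f = g

end QCDC

/-!
The map `diag` is linear, so by the chain rule `D[diag ; ∂⁽ⁿ⁾f] = (diag × diag) ; D[∂⁽ⁿ⁾f]`.
On the other side, [HD.8] rewrites `∂⁽ⁿ⁾[D f]` as `D[∂⁽ⁿ⁾f]` precomposed with the linear
shuffle `unzip`, and `diag_{A×A} ; unzip = diag × diag`. The scalar `1/n!` passes through `D`
by [CD.1].
-/

namespace CDC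

variable {k : Type w} [CommSemiring k] (X : CDC k)

theorem add_zero {A B : X.Obj} (f : X.Hom A B) : X.add f X.zero = f := by
  rw [X.add_comm, X.zero_add]

theorem comp_lift {C' C A B : X.Obj} (h : X.Hom C' C) (f : X.Hom C A) (g : X.Hom C B) :
    X.comp h (X.lift f g) = X.lift (X.comp h f) (X.comp h g) := by
  rw [← X.lift_unique (X.comp h (X.lift f g)), X.assoc, X.assoc, X.lift_fst, X.lift_snd]

theorem lift_fst_snd {A B : X.Obj} : X.lift (X.fst (A := A) (B := B)) X.snd = X.idm _ := by
  simpa only [X.id_comp] using X.lift_unique (X.idm (X.prod A B))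

theorem zero_comp_fst {C A B : X.Obj} :
    X.comp (X.zero (A := C)) (X.fst (A := A) (B := B)) = X.zero := by
  rw [← X.zero_smul (X.zero (A := C) (B := X.prod A B)), X.fst_smul, X.zero_smul]

theorem zero_comp_snd {C A B : X.Obj} :
    X.comp (X.zero (A := C)) (X.snd (A := A) (B := B)) = X.zero := by
  rw [← X.zero_smul (X.zero (A := C) (B := X.prod A B)), X.snd_smul, X.zero_smul]

theorem lift_zero_zero {C A B : X.Obj} :
    X.lift (X.zero (A := C) (B := A)) (X.zero (A := C) (B := B)) = X.zero := by
  simpa only [X.zero_comp_fst, X.zero_comp_snd] using X.lift_unique (X.zero (A := C))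

theorem D_zero {A B : X.Obj} : X.D (X.zero (A := A) (B := B)) = X.zero := by
  simpa only [X.zero_smul, X.zero_add] using X.CD1 0 0 (X.zero (A := A) (B := B)) X.zero

theorem D_smul {A B : X.Obj} (r : k) (f : X.Hom A B) :
    X.D (X.smul r f) = X.smul r (X.D f) := by
  simpa only [X.zero_smul, X.add_zero] using X.CD1 r 0 f f

def IsLinear {A B : X.Obj} (h : X.Hom A B) : Prop := X.D h = X.comp X.snd h

variable {X}

theorem isLinear_idm {A : X.Obj} : X.IsLinear (X.idm A) := by
  rw [IsLinear, X.CD3id, X.comp_id]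

theorem isLinear_fst {A B : X.Obj} : X.IsLinear (X.fst (A := A) (B := B)) := X.CD3fst

theorem isLinear_snd {A B : X.Obj} : X.IsLinear (X.snd (A := A) (B := B)) := X.CD3snd

theorem isLinear_zero {A B : X.Obj} : X.IsLinear (X.zero (A := A) (B := B)) := by
  rw [IsLinear, X.D_zero, X.comp_zero]

theorem IsLinear.lift {C A B : X.Obj} {f : X.Hom C A} {g : X.Hom C B}
    (hf : X.IsLinear f) (hg : X.IsLinear g) : X.IsLinear (X.lift f g) := by
  rw [IsLinear, X.CD4, hf, hg, X.comp_lift]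

theorem IsLinear.comp {A B C : X.Obj} {f : X.Hom A B} {g : X.Hom B C}
    (hf : X.IsLinear f) (hg : X.IsLinear g) : X.IsLinear (X.comp f g) := by
  rw [IsLinear, X.CD5, hf, hg, ← X.assoc, X.lift_snd, X.assoc]

theorem IsLinear.D_comp {A B C : X.Obj} {h : X.Hom A B} (hh : X.IsLinear h) (g : X.Hom B C) :
    X.D (X.comp h g) = X.comp (X.lift (X.comp X.fst h) (X.comp X.snd h)) (X.D g) := by
  rw [X.CD5, hh]

theorem isLinear_pad (A : X.Obj) : ∀ n : ℕ, X.IsLinear (X.pad A n)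
  | 0 => isLinear_idm
  | n + 1 => (isLinear_pad A n).lift isLinear_zero

theorem isLinear_diag (A : X.Obj) : ∀ n : ℕ, X.IsLinear (X.diag A n)
  | 0 => isLinear_zero
  | n + 1 => (isLinear_diag A n).lift isLinear_idm

variable (X)

/-- `((x,v),(a₁,b₁),…,(aₙ,bₙ)) ↦ ((x,a₁,…,aₙ),(v,b₁,…,bₙ))`. -/
def unzip (A : X.Obj) : (n : ℕ) → X.Hom (X.pow (X.prod A A) n) (X.prod (X.pow A n) (X.pow A n))
  | 0 => X.idm _
  | n + 1 =>
      X.lift (X.lift (X.comp X.fst (X.comp (unzip A n) X.fst)) (X.comp X.snd X.fst))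
             (X.lift (X.comp X.fst (X.comp (unzip A n) X.snd)) (X.comp X.snd X.snd))

variable {X}

theorem isLinear_unzip (A : X.Obj) : ∀ n : ℕ, X.IsLinear (X.unzip A n)
  | 0 => isLinear_idm
  | n + 1 =>
      ((isLinear_fst.comp ((isLinear_unzip A n).comp isLinear_fst)).lift
          (isLinear_snd.comp isLinear_fst)).lift
        ((isLinear_fst.comp ((isLinear_unzip A n).comp isLinear_snd)).lift
          (isLinear_snd.comp isLinear_snd))

theorem pad_comp_unzip (A : X.Obj) (n : ℕ) :
    X.comp (X.pad (X.prod A A) n) (X.unzip A n)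
      = X.lift (X.comp X.fst (X.pad A n)) (X.comp X.snd (X.pad A n)) := by
  induction n with
  | zero =>
    dsimp only [pad, unzip, pow]
    simp only [X.comp_id, lift_fst_snd]
  | succ n ih =>
    dsimp only [pad, unzip, pow]
    simp only [comp_lift, ← X.assoc, ih, X.lift_fst, X.lift_snd, X.comp_zero, zero_comp_fst,
      zero_comp_snd]

theorem diag_comp_unzip (A : X.Obj) (n : ℕ) :
    X.comp (X.diag (X.prod A A) n) (X.unzip A n)
      = X.lift (X.comp X.fst (X.diag A n)) (X.comp X.snd (X.diag A n)) := by
  induction n with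
  | zero =>
    dsimp only [diag, unzip, pow]
    simp only [X.comp_id, X.comp_zero, lift_zero_zero]
  | succ n ih =>
    dsimp only [diag, unzip, pow]
    simp only [comp_lift, ← X.assoc, ih, X.lift_fst, X.lift_snd, X.comp_id, X.id_comp]

/-- [HD.8]; the inductive step is the symmetry [CD.7] of the second derivative. -/
theorem pd_D {A B : X.Obj} (f : X.Hom A B) (n : ℕ) :
    X.pd n (X.D f) = X.comp (X.unzip A n) (X.D (X.pd n f)) := by
  induction n with
  | zero => exact (X.id_comp _).symm
  | succ n ih =>
    have hL : X.IsLinear (X.lift (X.fst (A := X.pow A n) (B := A)) (X.comp X.snd (X.pad A n))) :=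
      isLinear_fst.lift (isLinear_snd.comp (isLinear_pad A n))
    dsimp only [pd, pow]
    rw [ih, (isLinear_unzip A n).D_comp, hL.D_comp]
    dsimp only [unzip, pow]
    simp only [← X.assoc, comp_lift, X.lift_fst, X.lift_snd]
    conv_lhs =>
      rw [X.assoc X.snd, pad_comp_unzip, comp_lift, ← X.assoc, ← X.assoc,
        ← X.lift_unique (X.comp X.fst (X.unzip A n))]
    exact X.CD7 _ _ _ _ _

end CDC

/-- Taylor monomial extraction commutes with differentiation:
`M⁽ⁿ⁾[D[f]] = D[M⁽ⁿ⁾[f]]`. -/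
theorem M_D_comm {k : Type w} [CommSemiring k] (X : QCDC k)
    {A B : X.Obj} (f : X.Hom A B) (n : ℕ) :
    X.M n (X.D f) = X.D (X.M n f) := by
  rw [QCDC.M, QCDC.M, X.pd_D, ← X.assoc, X.diag_comp_unzip, X.D_smul,
    (CDC.isLinear_diag A n).D_comp]
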